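/- Let gcd(q, n) = 1, let g be a monic divisor of xⁿ − 1 over F_q with f(x) = (xⁿ−1)/g(x), and let e_g be the idempotent e_g(x) = −(1/n)·[((g*)′)*]·f(x) of F_q[x]/(xⁿ−1). Then for any root α of xⁿ − 1 in an extension field: e_g(α) = 1 if g(α) = 0, and e_g(α) = 0 if f(α) = 0. -/

import Mathlib

/-!
With `d = deg g`, reversing the derivative of the reversal gives `((g*)′)* = d·g − X·g′`, so
`e_g(α) = −(1/n)·(d·g(α) − α·g′(α))·f(α)`, which vanishes when `f(α) = 0`. When `g(α) = 0`,
differentiating `g·f = Xⁿ − 1` at `α` gives `g′(α)·f(α) = n·αⁿ⁻¹`, hence `e_g(α) = αⁿ = 1`;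
division by `n` is legitimate because `gcd(q, n) = 1` makes `n` nonzero in `F_q`.
-/

open Polynomial

/-- The idempotent `e_g(x) = -(1/n)·[((g*)′)*]·((xⁿ-1)/g)` attached to a monic divisor
`g` of `xⁿ - 1`, as a polynomial. -/
noncomputable def eIdem (F : Type*) [Field F] (n : ℕ) (g : Polynomial F) : Polynomial F :=
  C (-(n : F)⁻¹) *
    reflect (g.natDegree - 1) (derivative (reflect g.natDegree g)) *
    ((X ^ n - 1) /ₘ g)

namespace Polynomial

variable {R : Type*} [CommRing R]

theorem coeff_X_mul_derivative (p : R[X]) (i : ℕ) :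
    (X * derivative p).coeff i = i * p.coeff i := by
  cases i with
  | zero => simp
  | succ i => rw [coeff_X_mul, coeff_derivative, mul_comm]; push_cast; rfl

theorem reflect_derivative_reflect (p : R[X]) :
    reflect (p.natDegree - 1) (derivative (reflect p.natDegree p)) =
      C (p.natDegree : R) * p - X * derivative p := by
  set d := p.natDegree
  ext i
  rw [coeff_reflect, coeff_derivative, coeff_reflect, coeff_sub, coeff_C_mul,
    coeff_X_mul_derivative, ← sub_mul]
  by_cases hi : i < d
  · rw [revAt_le (by omega : i ≤ d - 1), revAt_le (by omega : d - 1 - i + 1 ≤ d),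
      show d - (d - 1 - i + 1) = i by omega, mul_comm]
    congr 1
    rw [← Nat.cast_sub hi.le, ← Nat.cast_succ, Nat.succ_eq_add_one,
      show d - 1 - i + 1 = d - i by omega]
  · -- `revAt (d - 1)` truncates at `d = 0`, but the index still lands beyond `deg p`
    have hlt : d < revAt (d - 1) i + 1 := by
      rcases le_or_gt i (d - 1) with h | h
      · rw [revAt_le h]; omega
      · rw [revAt_eq_self_of_lt h]; omega
    rw [revAt_eq_self_of_lt hlt, coeff_eq_zero_of_natDegree_lt hlt, zero_mul]
    rcases (not_lt.mp hi).eq_or_lt with rfl | hdi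
    · simp
    · rw [coeff_eq_zero_of_natDegree_lt hdi, mul_zero]

theorem aeval_derivative_mul_of_aeval_eq_zero {K : Type*} [CommRing K] [Algebra R K]
    {g : R[X]} {α : K} (hg : aeval α g = 0) (f : R[X]) :
    aeval α (derivative (g * f)) = aeval α (derivative g) * aeval α f := by
  simp [derivative_mul, hg]

end Polynomial

theorem FiniteField.natCast_ne_zero_of_coprime_card {F : Type*} [Field F] [Fintype F] {n : ℕ}
    (hn : Nat.Coprime (Fintype.card F) n) : (n : F) ≠ 0 := by
  intro h
  have hcard := (CharP.cast_eq_zero_iff F (ringChar F) _).mp (FiniteField.cast_card_eq_zero F)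
  have hchar := (CharP.cast_eq_zero_iff F (ringChar F) n).mp h
  exact CharP.ringChar_ne_one (Nat.eq_one_of_dvd_coprimes hn hcard hchar)

theorem eIdem_eq (F : Type*) [Field F] (n : ℕ) (g : F[X]) :
    eIdem F n g = C (-(n : F)⁻¹) * (C (g.natDegree : F) * g - X * derivative g) *
      ((X ^ n - 1) /ₘ g) := by
  rw [eIdem, reflect_derivative_reflect]

theorem stmt_10_general (F : Type*) [Field F] [Fintype F] (n : ℕ)
    (hq : Nat.Coprime (Fintype.card F) n)
    (g : Polynomial F) (hg : g.Monic) (hdvd : g ∣ X ^ n - 1)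
    (K : Type*) [Field K] [Algebra F K] (α : K) (hα : α ^ n = 1) :
    (aeval α g = 0 → aeval α (eIdem F n g) = 1) ∧
    (aeval α ((X ^ n - 1 : Polynomial F) /ₘ g) = 0 → aeval α (eIdem F n g) = 0) := by
  obtain ⟨f, hgf⟩ := hdvd
  have hf : (X ^ n - 1) /ₘ g = f := by rw [hgf, mul_divByMonic_cancel_left f hg]
  have hn : (n : F) ≠ 0 := FiniteField.natCast_ne_zero_of_coprime_card hq
  rw [eIdem_eq, hf]
  refine ⟨fun hgα => ?_, fun hfα => by simp [hfα]⟩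
  have hroot : α * (aeval α (derivative g) * aeval α f) = n := by
    have hn1 : 1 ≤ n := Nat.one_le_iff_ne_zero.mpr (by rintro rfl; exact hn Nat.cast_zero)
    rw [← aeval_derivative_mul_of_aeval_eq_zero hgα, ← hgf]
    simp only [derivative_sub, derivative_X_pow, derivative_one, sub_zero, map_mul, aeval_X_pow,
      map_natCast]
    rw [mul_comm α, mul_assoc, ← pow_succ, Nat.sub_add_cancel hn1, hα, mul_one]
  simp only [map_mul, map_sub, aeval_C, aeval_X, hgα, mul_zero, zero_sub]
  rw [map_neg, neg_mul_neg, mul_assoc, mul_assoc, hroot, ← map_natCast (algebraMap F K), ← map_mul,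
    inv_mul_cancel₀ hn, map_one]

/-- At a root `α` of `xⁿ - 1` in an extension field, `e_g(α) = 1` if `g(α) = 0` and
`e_g(α) = 0` if `f(α) = 0`, where `f = (xⁿ-1)/g`. -/
theorem stmt_10 (F : Type*) [Field F] [Fintype F] (n : ℕ) (hn : 0 < n)
    (hq : Nat.Coprime (Fintype.card F) n)
    (g : Polynomial F) (hg : g.Monic) (hdvd : g ∣ X ^ n - 1)
    (K : Type*) [Field K] [Algebra F K] (α : K) (hα : α ^ n = 1) :
    (aeval α g = 0 → aeval α (eIdem F n g) = 1) ∧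
    (aeval α ((X ^ n - 1 : Polynomial F) /ₘ g) = 0 → aeval α (eIdem F n g) = 0) :=
  stmt_10_general F n hq g hg hdvd K α hα
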